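/- Let G be a finite simple graph on n ≥ 1 vertices and let λ > 0. Then (1/n)·Σ_{u∈V(G)} p_u·(1+(d_u+1)λ)/λ ≥ 1; equivalently, (1/n)·Σ_{u∈V(G)} p_u/f_λ(d_u) ≥ 1 where f_λ(d) = λ/(1+(d+1)λ) is the occupancy fraction of K_{d+1}. -/

import Mathlib

open scoped Classical

/-- The finset of independent sets of a finite simple graph (the empty set counts). -/
noncomputable def indepSets {V : Type*} [Fintype V] (G : SimpleGraph V) : Finset (Finset V) :=
  Finset.univ.filter fun I => ∀ u ∈ I, ∀ v ∈ I, ¬ G.Adj u v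

/-- The hard-core partition function `Z_G(λ) = Σ_{I independent} λ^|I|`. -/
noncomputable def hcZ {V : Type*} [Fintype V] (G : SimpleGraph V) (l : ℝ) : ℝ :=
  ∑ I ∈ indepSets G, l ^ I.card

/-- The probability that vertex `u` lies in a random independent set drawn from the
hard-core model on `G` at fugacity `λ`. -/
noncomputable def hcMarginal {V : Type*} [Fintype V] (G : SimpleGraph V) (l : ℝ) (u : V) : ℝ :=
  (∑ I ∈ (indepSets G).filter (fun I => u ∈ I), l ^ I.card) / hcZ G l

/-!
Fix a vertex `u`. An independent set either avoids the open neighbourhood `N(u)` or contains some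
`v ∈ N(u)`. Deleting `u` maps the independent sets containing `u` bijectively onto those avoiding
`N[u]`, so the sets avoiding `N(u)` carry weight `(1 + λ)/λ · Z p_u`, while a union bound gives the
others weight at most `Z Σ_{v ∈ N(u)} p_v`. Hence `λ ≤ (1 + λ) p_u + λ Σ_{v ∈ N(u)} p_v`; summing over
`u`, each `p_v` is counted once for every neighbour of `v`, which gives
`n λ ≤ Σ_u p_u (1 + (d_u + 1) λ)`.
-/

open Finset

section General

variable {ι α M : Type*} [AddCommMonoid M] [PartialOrder M] [IsOrderedAddMonoid M]

lemma sum_filter_exists_le_sum_sum_filter (s : Finset α) (t : Finset ι) (p : ι → α → Prop)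
    [∀ i, DecidablePred (p i)] [DecidablePred fun a => ∃ i ∈ t, p i a] {f : α → M}
    (hf : ∀ a ∈ s, 0 ≤ f a) :
    ∑ a ∈ s with ∃ i ∈ t, p i a, f a ≤ ∑ i ∈ t, ∑ a ∈ s with p i a, f a := by
  simp only [sum_filter]
  rw [sum_comm]
  refine sum_le_sum fun a ha => ?_
  split_ifs with hex
  · obtain ⟨i, hi, hpi⟩ := hex
    calc f a = if p i a then f a else 0 := (if_pos hpi).symm
      _ ≤ ∑ j ∈ t, if p j a then f a else 0 :=
        single_le_sum (f := fun j => if p j a then f a else 0)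
          (fun j _ => by split_ifs <;> simp [hf a ha]) hi
  · exact sum_nonneg fun j _ => by split_ifs <;> simp [hf a ha]

end General

namespace SimpleGraph

variable {V : Type*} [Fintype V] (G : SimpleGraph V)

lemma sum_sum_neighborFinset {M : Type*} [AddCommMonoid M] (f : V → M) :
    ∑ u, ∑ v ∈ G.neighborFinset u, f v = ∑ v, G.degree v • f v := by
  rw [sum_comm' (t' := univ) (s' := fun v => G.neighborFinset v)
    (fun u v => by simp [mem_neighborFinset, G.adj_comm])]
  simp [card_neighborFinset_eq_degree]

end SimpleGraph

section HardCore

variable {V : Type*} [Fintype V] (G : SimpleGraph V)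

lemma mem_indepSets_iff_isIndepSet {I : Finset V} :
    I ∈ indepSets G ↔ G.IsIndepSet (I : Set V) := by
  simp only [indepSets, mem_filter, mem_univ, true_and]
  refine ⟨fun h x hx y hy _ => h x hx y hy, fun h x hx y hy => ?_⟩
  rcases eq_or_ne x y with rfl | hxy
  · exact G.irrefl
  · exact h hx hy hxy

lemma insert_mem_indepSets_iff {u : V} {J : Finset V} (hu : u ∉ J) :
    insert u J ∈ indepSets G ↔ J ∈ indepSets G ∧ ∀ v ∈ J, ¬ G.Adj u v := by
  rw [mem_indepSets_iff_isIndepSet, mem_indepSets_iff_isIndepSet, coe_insert,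
    SimpleGraph.IsIndepSet, Set.pairwise_insert]
  refine and_congr_right fun _ => ⟨fun h v hv => (h v hv ?_).1,
    fun h v hv _ => ⟨h v hv, fun hvu => h v hv hvu.symm⟩⟩
  rintro rfl
  exact hu hv

lemma hcZ_pos {l : ℝ} (hl : 0 ≤ l) : 0 < hcZ G l :=
  sum_pos' (fun I _ => pow_nonneg hl _)
    ⟨∅, by simp [indepSets], by simp⟩

/-- `I ↦ I.erase u` is a bijection from the independent sets containing `u` onto those avoiding
the closed neighbourhood of `u`. -/
lemma sum_indepSets_mem_eq (l : ℝ) (u : V) :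
    ∑ I ∈ indepSets G with u ∈ I, l ^ #I
      = l * ∑ J ∈ indepSets G with u ∉ J ∧ ∀ v ∈ J, ¬ G.Adj u v, l ^ #J := by
  rw [mul_sum]
  symm
  refine sum_nbij' (insert u) (fun I => I.erase u) ?_ ?_ ?_ ?_ ?_
  · intro J hJ
    simp only [mem_filter] at hJ ⊢
    exact ⟨(insert_mem_indepSets_iff G hJ.2.1).2 ⟨hJ.1, hJ.2.2⟩, mem_insert_self u J⟩
  · intro I hI
    simp only [mem_filter] at hI ⊢
    have hIu := (insert_mem_indepSets_iff G (notMem_erase u I)).1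
      (by rw [insert_erase hI.2]; exact hI.1)
    exact ⟨hIu.1, notMem_erase u I, hIu.2⟩
  · intro J hJ
    simp only [mem_filter] at hJ
    exact erase_insert hJ.2.1
  · intro I hI
    simp only [mem_filter] at hI
    exact insert_erase hI.2
  · intro J hJ
    simp only [mem_filter] at hJ
    rw [card_insert_of_notMem hJ.2.1, pow_succ, mul_comm]

lemma sum_indepSets_avoid_neighborSet_eq (l : ℝ) (u : V) :
    ∑ I ∈ indepSets G with ∀ v ∈ I, ¬ G.Adj u v, l ^ #I
      = ∑ I ∈ indepSets G with u ∉ I ∧ ∀ v ∈ I, ¬ G.Adj u v, l ^ #I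
        + ∑ I ∈ indepSets G with u ∈ I, l ^ #I := by
  rw [← sum_filter_not_add_sum_filter _ (u ∈ ·), filter_filter, filter_filter]
  congr 2
  · exact filter_congr fun _ _ => and_comm
  · refine filter_congr fun I hI => ⟨And.right, fun hu => ⟨fun v hv => ?_, hu⟩⟩
    simp only [indepSets, mem_filter, mem_univ, true_and] at hI
    exact hI u hu v hv

lemma mul_hcZ_le (u : V) {l : ℝ} (hl : 0 ≤ l) :
    l * hcZ G l ≤ (1 + l) * ∑ I ∈ indepSets G with u ∈ I, l ^ #I
      + l * ∑ v ∈ G.neighborFinset u, ∑ I ∈ indepSets G with v ∈ I, l ^ #I := by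
  have h_avoid : (1 + l) * ∑ I ∈ indepSets G with u ∈ I, l ^ #I
      = l * ∑ I ∈ indepSets G with ∀ v ∈ I, ¬ G.Adj u v, l ^ #I := by
    rw [sum_indepSets_avoid_neighborSet_eq, sum_indepSets_mem_eq]
    ring
  have h_meet : ∑ I ∈ indepSets G with ¬ ∀ v ∈ I, ¬ G.Adj u v, l ^ #I
      ≤ ∑ v ∈ G.neighborFinset u, ∑ I ∈ indepSets G with v ∈ I, l ^ #I := by
    have h_iff : ∀ I : Finset V, (¬ ∀ v ∈ I, ¬ G.Adj u v) ↔ ∃ v ∈ G.neighborFinset u, v ∈ I :=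
      fun I => by
        simp only [not_forall, not_not, SimpleGraph.mem_neighborFinset, exists_prop]
        exact exists_congr fun v => and_comm
    rw [filter_congr fun I _ => h_iff I]
    exact sum_filter_exists_le_sum_sum_filter _ _ (· ∈ ·) fun I _ => pow_nonneg hl _
  rw [h_avoid, hcZ, ← sum_filter_add_sum_filter_not _ (fun I => ∀ v ∈ I, ¬ G.Adj u v), mul_add]
  exact add_le_add le_rfl (mul_le_mul_of_nonneg_left h_meet hl)

lemma le_hcMarginal_add_sum_neighborFinset (u : V) {l : ℝ} (hl : 0 ≤ l) :
    l ≤ (1 + l) * hcMarginal G l u + l * ∑ v ∈ G.neighborFinset u, hcMarginal G l v := by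
  have hZ := hcZ_pos G hl
  simp only [hcMarginal, ← sum_div, mul_div_assoc', ← add_div, le_div_iff₀ hZ]
  exact mul_hcZ_le G u hl

lemma card_mul_le_sum_hcMarginal {l : ℝ} (hl : 0 ≤ l) :
    Fintype.card V * l
      ≤ ∑ u, hcMarginal G l u * (1 + ((G.degree u : ℝ) + 1) * l) := by
  calc Fintype.card V * l = ∑ _u : V, l := by simp
    _ ≤ ∑ u, ((1 + l) * hcMarginal G l u
          + l * ∑ v ∈ G.neighborFinset u, hcMarginal G l v) :=
        sum_le_sum fun u _ => le_hcMarginal_add_sum_neighborFinset G u hl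
    _ = ∑ u, ((1 + l) * hcMarginal G l u + l * (G.degree u • hcMarginal G l u)) := by
        simp only [sum_add_distrib, ← mul_sum, G.sum_sum_neighborFinset]
    _ = ∑ u, hcMarginal G l u * (1 + ((G.degree u : ℝ) + 1) * l) :=
        sum_congr rfl fun u _ => by rw [nsmul_eq_mul]; ring

end HardCore

/-- Every graph satisfies the vertex-averaged local-occupancy inequality with
`f_λ(d) = λ/(1+(d+1)λ)`, the occupancy fraction of `K_{d+1}`. -/
theorem stmt12 {V : Type*} [Fintype V] (G : SimpleGraph V) (hn : 1 ≤ Fintype.card V)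
    (l : ℝ) (hl : 0 < l) :
    1 ≤ (1 / (Fintype.card V : ℝ)) *
        ∑ u : V, hcMarginal G l u * (1 + ((G.degree u : ℝ) + 1) * l) / l := by
  have hn' : (0 : ℝ) < Fintype.card V := by exact_mod_cast hn
  rw [← sum_div, one_div, inv_mul_eq_div, div_div, one_le_div (by positivity)]
  exact (mul_comm _ _).trans_le (card_mul_le_sum_hcMarginal G hl.le)
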